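/- Let p ≥ 2 and n ≥ 1 be integers and let e_1, …, e_{p+1} be nonnegative integers. Then the number of (p+1)-tuples (T_1, …, T_{p+1}) of sets with T_{p+1} ⊆ T_p ⊆ … ⊆ T_1 ⊆ [1,n], |T_i| = e_i for all i, and such that for every k ∈ T_{p+1} with k ≥ 2 one has k−1 ∈ T_1, equals C(e_1, e_{p+1})·C(n−e_{p+1}, e_1−e_{p+1})·∏_{k=1}^{p−1} C(e_k − e_{p+1}, e_{k+1} − e_{p+1}). -/

import Mathlib

/-- Binomial coefficient `C(a,b)` for integers, with the convention that it is `0`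
when `a < 0` or `b < 0` (and, as usual, when `b > a`), and `C(a,0) = 1` for `a ≥ 0`. -/
def intChoose (a b : ℤ) : ℕ :=
  if 0 ≤ a ∧ 0 ≤ b then a.toNat.choose b.toNat else 0

/-!
Sending `T` to the pair `(T 1, T (p + 1))` splits the count. Over a fixed admissible pair `S ⊆ U`
the intermediate sets form a chain in the interval `[S, U]` of the Boolean lattice; choosing each
`T (k + 1)` between `S` and `T k` in turn gives `∏ C(e_k - e_{p+1}, e_{k+1} - e_{p+1})`.
The admissible pairs on `[1, n]` are counted by induction on `n`, splitting on whether `n ∈ U` and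
`n ∈ S`: removing `n` from `S` leaves the constraint `n - 1 ∈ U`, so the pairs whose `U` contains
the top element are counted alongside. Both counts satisfy Pascal-type recurrences, solved by
`C(a, m) C(n - m, a - m)` once the binomial coefficient takes integer arguments, which absorbs
every boundary case.
-/

lemma intChoose_natCast (a b : ℕ) : intChoose a b = a.choose b := by
  simp [intChoose]

lemma intChoose_of_neg_left {a b : ℤ} (h : a < 0) : intChoose a b = 0 := by
  simp [intChoose, h.not_ge]

lemma intChoose_of_neg_right {a b : ℤ} (h : b < 0) : intChoose a b = 0 := by
  simp [intChoose, h.not_ge]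

lemma intChoose_add_one_left (x y : ℤ) :
    intChoose (x + 1) y =
      intChoose x (y - 1) + intChoose x y + if x = -1 ∧ y = 0 then 1 else 0 := by
  rcases lt_or_ge y 0 with hy | hy
  · simp [intChoose_of_neg_right, hy, hy.ne, show y - 1 < 0 by omega]
  obtain ⟨b, rfl⟩ := Int.eq_ofNat_of_zero_le hy
  rcases lt_or_ge x 0 with hx | hx
  · rw [intChoose_of_neg_left hx, intChoose_of_neg_left hx]
    rcases eq_or_lt_of_le (Int.lt_iff_add_one_le.mp hx) with hx1 | hx1
    · obtain rfl : x = -1 := by omega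
      rcases b with _ | b
      · simp [intChoose]
      · simp [intChoose, show (b : ℤ) + 1 ≠ 0 by omega]
    · simp [intChoose_of_neg_left (show x + 1 < 0 by omega), show x ≠ -1 by omega]
  obtain ⟨a, rfl⟩ := Int.eq_ofNat_of_zero_le hx
  rcases b with _ | b
  · simp [intChoose, show (0 : ℤ) ≤ a + 1 by omega]
  · have pascal := Nat.choose_succ_succ a b
    rw [← intChoose_natCast, ← intChoose_natCast, ← intChoose_natCast] at pascal
    push_cast at pascal
    simp [pascal]

open Finset

lemma card_filter_card_eq_Icc {α : Type*} [DecidableEq α] {S W : Finset α} (h : S ⊆ W) (c : ℕ) :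
    #{V ∈ Icc S W | #V = c} = intChoose (#W - #S) (c - #S) := by
  rcases lt_or_ge c #S with hc | hc
  · rw [intChoose_of_neg_right (by omega), card_eq_zero, filter_eq_empty_iff]
    intro V hV hVc
    have := card_le_card (mem_Icc.mp hV).1
    omega
  rw [← Nat.cast_sub (card_le_card h), ← Nat.cast_sub hc, intChoose_natCast,
    ← card_sdiff_of_subset h, ← card_powersetCard]
  refine card_nbij' (· \ S) (S ∪ ·) ?_ ?_ ?_ ?_
  · intro V hV
    simp only [coe_filter, mem_Icc, Set.mem_ofPred_eq, mem_coe, mem_powersetCard] at hV ⊢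
    exact ⟨sdiff_subset_sdiff hV.1.2 subset_rfl, by rw [card_sdiff_of_subset hV.1.1, hV.2]⟩
  · intro X hX
    simp only [coe_filter, mem_Icc, Set.mem_ofPred_eq, mem_coe, mem_powersetCard] at hX ⊢
    refine ⟨⟨subset_union_left, union_subset h (hX.1.trans sdiff_subset)⟩, ?_⟩
    rw [card_union_of_disjoint (disjoint_of_subset_right hX.1 disjoint_sdiff), hX.2]
    omega
  · intro V hV
    exact union_sdiff_of_subset (mem_Icc.mp (mem_filter.mp hV).1).1
  · intro X hX
    exact union_sdiff_cancel_left
      (disjoint_of_subset_right (mem_powersetCard.mp hX).1 disjoint_sdiff)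

open scoped Classical in
noncomputable def boxFamilies {α β : Type*} (s : Finset α) (W : Finset β) :
    Finset (α → Finset β) :=
  (s.pi fun _ => W.powerset).image fun f i => if h : i ∈ s then f i h else ∅

lemma mem_boxFamilies {α β : Type*} {s : Finset α} {W : Finset β} {T : α → Finset β} :
    T ∈ boxFamilies s W ↔ (∀ i ∈ s, T i ⊆ W) ∧ ∀ i ∉ s, T i = ∅ := by
  classical
  constructor
  · simp only [boxFamilies, mem_image, mem_pi, mem_powerset]
    rintro ⟨f, hf, rfl⟩
    exact ⟨fun i hi => by simpa [hi] using hf i hi, fun i hi => by simp [hi]⟩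
  · rintro ⟨hW, h0⟩
    refine mem_image.mpr ⟨fun i _ => T i, mem_pi.mpr fun i hi => mem_powerset.mpr (hW i hi), ?_⟩
    funext i
    split_ifs with hi
    · rfl
    · exact (h0 i hi).symm

lemma subset_one_of_chain {T : ℕ → Finset ℕ} {r : ℕ}
    (h : ∀ k, 1 ≤ k → k ≤ r → T (k + 1) ⊆ T k) {j : ℕ} (hj : 1 ≤ j) (hjr : j ≤ r + 1) :
    T j ⊆ T 1 := by
  induction j, hj using Nat.le_induction with
  | base => exact subset_rfl
  | succ j hj ih => exact (h j hj (by omega)).trans (ih (by omega))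

open scoped Classical in
noncomputable def chains (r : ℕ) (U S : Finset ℕ) (c : ℕ → ℕ) : Finset (ℕ → Finset ℕ) :=
  {T ∈ boxFamilies (Icc 1 (r + 1)) U | T 1 = U ∧ S ⊆ T (r + 1) ∧
    (∀ k, 1 ≤ k → k ≤ r → T (k + 1) ⊆ T k) ∧ ∀ i, 1 ≤ i → i ≤ r + 1 → #(T i) = c i}

lemma mem_chains {r : ℕ} {U S : Finset ℕ} {c : ℕ → ℕ} {T : ℕ → Finset ℕ} :
    T ∈ chains r U S c ↔ T 1 = U ∧ S ⊆ T (r + 1) ∧ (∀ k, 1 ≤ k → k ≤ r → T (k + 1) ⊆ T k) ∧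
      (∀ i, 1 ≤ i → i ≤ r + 1 → #(T i) = c i) ∧ ∀ i, i < 1 ∨ r + 1 < i → T i = ∅ := by
  simp only [chains, mem_filter, mem_boxFamilies, mem_Icc]
  constructor
  · rintro ⟨⟨-, h0⟩, h⟩
    exact ⟨h.1, h.2.1, h.2.2.1, h.2.2.2, fun i hi => h0 i (by omega)⟩
  · rintro ⟨h1, hS, hchain, hc, h0⟩
    exact ⟨⟨fun i hi => h1 ▸ subset_one_of_chain hchain hi.1 hi.2,
      fun i hi => h0 i (by omega)⟩, h1, hS, hchain, hc⟩

lemma chains_zero {U S : Finset ℕ} {c : ℕ → ℕ} (hSU : S ⊆ U) (hU : #U = c 1) :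
    chains 0 U S c = {Function.update (fun _ => ∅) 1 U} := by
  ext T
  rw [mem_chains, mem_singleton]
  constructor
  · rintro ⟨h1, -, -, -, h0⟩
    funext i
    by_cases hi : i = 1
    · simp [hi, h1]
    · simp [hi, h0 i (by omega)]
  · rintro rfl
    refine ⟨by simp, by simpa using hSU, by omega, fun i _ _ => ?_, fun i _ => ?_⟩
    · obtain rfl : i = 1 := by omega
      simpa using hU
    · simp [show i ≠ 1 by omega]

open scoped Classical in
lemma card_fiber_update_chains {r : ℕ} {U S : Finset ℕ} {c : ℕ → ℕ} {T' : ℕ → Finset ℕ}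
    (hT' : T' ∈ chains r U S c) :
    #{T ∈ chains (r + 1) U S c | Function.update T (r + 2) ∅ = T'} =
      #{V ∈ Icc S (T' (r + 1)) | #V = c (r + 2)} := by
  refine card_nbij' (fun T => T (r + 2)) (fun V => Function.update T' (r + 2) V) ?_ ?_ ?_ ?_
  · intro T hT
    simp only [coe_filter, mem_chains, Set.mem_ofPred_eq, mem_Icc] at hT ⊢
    obtain ⟨⟨-, hS, hchain, hc, -⟩, rfl⟩ := hT
    exact ⟨⟨hS, by simpa using hchain (r + 1) (by omega) le_rfl⟩, hc (r + 2) (by omega) le_rfl⟩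
  · intro V hV
    simp only [coe_filter, mem_chains, Set.mem_ofPred_eq, mem_Icc] at hT' hV ⊢
    obtain ⟨h1, -, hchain, hc, h0⟩ := hT'
    obtain ⟨⟨hSV, hVT⟩, hVc⟩ := hV
    refine ⟨⟨by simp [h1], by simpa using hSV, fun k hk hkr => ?_, fun i hi hir => ?_,
      fun i hi => ?_⟩, ?_⟩
    · rcases eq_or_lt_of_le hkr with rfl | hkr
      · simpa using hVT
      · rw [Function.update_of_ne (by omega), Function.update_of_ne (by omega)]
        exact hchain k hk (by omega)
    · rcases eq_or_lt_of_le hir with rfl | hir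
      · simpa using hVc
      · rw [Function.update_of_ne (by omega)]
        exact hc i hi (by omega)
    · rw [Function.update_of_ne (by omega)]
      exact h0 i (by omega)
    · rw [Function.update_idem, Function.update_eq_self_iff, h0 (r + 2) (by omega)]
  · intro T hT
    simp only [coe_filter, Set.mem_ofPred_eq] at hT
    simp [← hT.2]
  · intro V _
    simp

theorem card_chains (r : ℕ) {U S : Finset ℕ} {c : ℕ → ℕ} (hSU : S ⊆ U) (hU : #U = c 1) :
    #(chains r U S c) = ∏ k ∈ Icc 1 r, intChoose (c k - #S) (c (k + 1) - #S) := by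
  induction r with
  | zero => simp [chains_zero hSU hU]
  | succ r ih =>
    classical
    have htrunc : ∀ T ∈ chains (r + 1) U S c, Function.update T (r + 2) ∅ ∈ chains r U S c := by
      intro T hT
      rw [mem_chains] at hT ⊢
      obtain ⟨h1, hS, hchain, hc, h0⟩ := hT
      refine ⟨by simp [h1], ?_, fun k hk hkr => ?_, fun i hi hir => ?_, fun i hi => ?_⟩
      · rw [Function.update_of_ne (by omega)]
        exact hS.trans (hchain (r + 1) (by omega) le_rfl)
      · rw [Function.update_of_ne (by omega), Function.update_of_ne (by omega)]
        exact hchain k hk (by omega)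
      · rw [Function.update_of_ne (by omega)]
        exact hc i hi (by omega)
      · rcases eq_or_ne i (r + 2) with rfl | hi'
        · simp
        · rw [Function.update_of_ne hi']
          exact h0 i (by omega)
    rw [card_eq_sum_card_fiberwise htrunc, sum_const_nat fun T' hT' => ?_, ih,
      prod_Icc_succ_top (by omega)]
    rw [card_fiber_update_chains hT', card_filter_card_eq_Icc (mem_chains.mp hT').2.1,
      (mem_chains.mp hT').2.2.2.1 (r + 1) (by omega) le_rfl]

def admissiblePairs (n a m : ℕ) : Finset (Finset ℕ × Finset ℕ) :=
  {z ∈ (Icc 1 n).powerset ×ˢ (Icc 1 n).powerset |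
    #z.1 = a ∧ #z.2 = m ∧ z.2 ⊆ z.1 ∧ ∀ k ∈ z.2, 2 ≤ k → k - 1 ∈ z.1}

/-- `n = 0 ∨ n ∈ U` is exactly what an element `n + 1 ∈ S` demands of `U`. -/
def admissiblePairsTop (n a m : ℕ) : Finset (Finset ℕ × Finset ℕ) :=
  {z ∈ admissiblePairs n a m | n = 0 ∨ n ∈ z.1}

lemma mem_admissiblePairs {n a m : ℕ} {z : Finset ℕ × Finset ℕ} :
    z ∈ admissiblePairs n a m ↔ z.1 ⊆ Icc 1 n ∧ #z.1 = a ∧ #z.2 = m ∧ z.2 ⊆ z.1 ∧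
      ∀ k ∈ z.2, 2 ≤ k → k - 1 ∈ z.1 := by
  simp only [admissiblePairs, mem_filter, mem_product, mem_powerset]
  exact ⟨fun ⟨⟨hU, _⟩, h⟩ => ⟨hU, h⟩, fun ⟨hU, h⟩ => ⟨⟨hU, h.2.2.1.trans hU⟩, h⟩⟩

lemma card_admissiblePairs_zero (a m : ℕ) :
    #(admissiblePairs 0 a m) = if a = 0 ∧ m = 0 then 1 else 0 := by
  split_ifs with h
  · obtain ⟨rfl, rfl⟩ := h
    simp [admissiblePairs, filter_singleton]
  · simp [admissiblePairs, filter_singleton, eq_comm, h]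

lemma card_admissiblePairs_succ_eq_add (n a m : ℕ) :
    #(admissiblePairs (n + 1) a m) =
      #(admissiblePairs n a m) + #(admissiblePairsTop (n + 1) a m) := by
  rw [← card_filter_add_card_filter_not (s := admissiblePairs (n + 1) a m)
    (fun z => n + 1 ∈ z.1), add_comm]
  congr 2
  · ext ⟨U, S⟩
    simp only [mem_filter, mem_admissiblePairs, subset_iff, mem_Icc]
    constructor
    · rintro ⟨⟨hU, h⟩, hn⟩
      refine ⟨fun x hx => ?_, h⟩
      have := hU hx
      have : x ≠ n + 1 := fun h => hn (h ▸ hx)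
      omega
    · rintro ⟨hU, h⟩
      exact ⟨⟨fun x hx => by have := hU hx; omega, h⟩, fun hn => by have := hU hn; omega⟩
  · simp [admissiblePairsTop]

lemma admissiblePairsTop_succ_zero (n m : ℕ) : admissiblePairsTop (n + 1) 0 m = ∅ := by
  ext ⟨U, S⟩
  simp only [admissiblePairsTop, mem_filter, mem_admissiblePairs, card_eq_zero]
  grind

lemma card_admissiblePairsTop_succ_succ_eq_add (n a m : ℕ) :
    #(admissiblePairsTop (n + 1) (a + 1) m) =
      #(admissiblePairs n a m) + #{z ∈ admissiblePairsTop (n + 1) (a + 1) m | n + 1 ∈ z.2} := by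
  rw [← card_filter_add_card_filter_not (s := admissiblePairsTop (n + 1) (a + 1) m)
    (fun z => n + 1 ∈ z.2), add_comm]
  congr 1
  refine card_nbij' (fun z => (z.1.erase (n + 1), z.2)) (fun z => (insert (n + 1) z.1, z.2))
    ?_ ?_ ?_ ?_
  · rintro ⟨U, S⟩ h
    simp only [coe_filter, admissiblePairsTop, mem_filter, mem_admissiblePairs,
      Set.mem_ofPred_eq, mem_coe, subset_iff, mem_Icc, mem_erase] at h ⊢
    refine ⟨by grind, by rw [card_erase_of_mem (by grind)]; grind, by grind, by grind, by grind⟩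
  · rintro ⟨U, S⟩ h
    simp only [coe_filter, admissiblePairsTop, mem_filter, mem_admissiblePairs,
      Set.mem_ofPred_eq, mem_coe, subset_iff, mem_Icc, mem_insert] at h ⊢
    refine ⟨⟨⟨by grind, by rw [card_insert_of_notMem (by grind)]; grind, by grind, by grind,
      by grind⟩, by grind⟩, by grind⟩
  · rintro ⟨U, S⟩ h
    simp only [coe_filter, admissiblePairsTop, mem_filter, Set.mem_ofPred_eq] at h
    simp [insert_erase (h.1.2.resolve_left (by omega))]
  · rintro ⟨U, S⟩ h
    have hn : n + 1 ∉ U := fun hn => by have := (mem_admissiblePairs.mp h).1 hn; simp at this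
    simp [erase_insert hn]

lemma card_filter_mem_admissiblePairsTop (n a m : ℕ) :
    #{z ∈ admissiblePairsTop (n + 1) (a + 1) (m + 1) | n + 1 ∈ z.2} =
      #(admissiblePairsTop n a m) := by
  refine card_nbij' (fun z => (z.1.erase (n + 1), z.2.erase (n + 1)))
    (fun z => (insert (n + 1) z.1, insert (n + 1) z.2)) ?_ ?_ ?_ ?_
  · rintro ⟨U, S⟩ h
    simp only [coe_filter, admissiblePairsTop, mem_filter, mem_admissiblePairs,
      Set.mem_ofPred_eq, subset_iff, mem_Icc, mem_erase] at h ⊢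
    refine ⟨⟨by grind, by rw [card_erase_of_mem (by grind)]; grind,
      by rw [card_erase_of_mem (by grind)]; grind, by grind, by grind⟩, by grind⟩
  · rintro ⟨U, S⟩ h
    simp only [coe_filter, admissiblePairsTop, mem_filter, mem_admissiblePairs,
      Set.mem_ofPred_eq, subset_iff, mem_Icc, mem_insert] at h ⊢
    refine ⟨⟨⟨by grind, by rw [card_insert_of_notMem (by grind)]; grind,
      by rw [card_insert_of_notMem (by grind)]; grind, by grind, by grind⟩, by grind⟩, by grind⟩
  · rintro ⟨U, S⟩ h
    simp only [coe_filter, admissiblePairsTop, mem_filter, mem_admissiblePairs,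
      Set.mem_ofPred_eq] at h
    simp [insert_erase h.2, insert_erase (h.1.1.2.2.2.1 h.2)]
  · rintro ⟨U, S⟩ h
    simp only [mem_coe, admissiblePairsTop, mem_filter, mem_admissiblePairs] at h
    have hn : n + 1 ∉ U := fun hn => by have := h.1.1 hn; simp at this
    simp [erase_insert hn, erase_insert (fun hS => hn (h.1.2.2.2.1 hS))]

lemma card_admissiblePairsTop_succ_of_formula (n a m : ℕ)
    (hX : ∀ a m, #(admissiblePairs n a m) = a.choose m * intChoose (n - m) (a - m))
    (hTop : ∀ a m, #(admissiblePairsTop n a m) =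
      a.choose m * intChoose (n - m - 1) (a - m - 1) + if a = m ∧ m = n then 1 else 0) :
    #(admissiblePairsTop (n + 1) a m) =
      a.choose m * intChoose (n + 1 - m - 1) (a - m - 1) + if a = m ∧ m = n + 1 then 1 else 0 := by
  cases a with
  | zero =>
    rw [admissiblePairsTop_succ_zero, card_empty, intChoose_of_neg_right (by omega)]
    grind
  | succ a =>
    rw [card_admissiblePairsTop_succ_succ_eq_add, hX]
    cases m with
    | zero =>
      have hempty : {z ∈ admissiblePairsTop (n + 1) (a + 1) 0 | n + 1 ∈ z.2} = ∅ := by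
        ext ⟨U, S⟩
        simp only [admissiblePairsTop, mem_filter, mem_admissiblePairs, card_eq_zero]
        grind
      simp [hempty]
    | succ m =>
      rw [card_filter_mem_admissiblePairsTop, hTop, Nat.choose_succ_succ']
      push_cast
      ring_nf

lemma card_admissiblePairs_succ_of_formula (n a m : ℕ)
    (hX : ∀ a m, #(admissiblePairs n a m) = a.choose m * intChoose (n - m) (a - m))
    (hTop : #(admissiblePairsTop (n + 1) a m) =
      a.choose m * intChoose (n + 1 - m - 1) (a - m - 1) + if a = m ∧ m = n + 1 then 1 else 0) :
    #(admissiblePairs (n + 1) a m) = a.choose m * intChoose (n + 1 - m) (a - m) := by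
  rw [card_admissiblePairs_succ_eq_add, hX, hTop, show (n : ℤ) + 1 - m - 1 = n - m by ring,
    show (n : ℤ) + 1 - m = n - m + 1 by ring, intChoose_add_one_left]
  by_cases h : a = m ∧ m = n + 1
  · obtain ⟨rfl, rfl⟩ := h
    rw [if_pos ⟨rfl, rfl⟩, if_pos (by omega), Nat.choose_self]
    ring
  · rw [if_neg h, if_neg (by omega)]
    ring

theorem card_admissiblePairs (n a m : ℕ) :
    #(admissiblePairs n a m) = a.choose m * intChoose (n - m) (a - m) := by
  suffices (∀ a m, #(admissiblePairs n a m) = a.choose m * intChoose (n - m) (a - m)) ∧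
      ∀ a m, #(admissiblePairsTop n a m) =
        a.choose m * intChoose (n - m - 1) (a - m - 1) + if a = m ∧ m = n then 1 else 0 from
    this.1 a m
  induction n with
  | zero =>
    have hTop : ∀ a m, admissiblePairsTop 0 a m = admissiblePairs 0 a m := fun a m =>
      filter_true_of_mem fun _ _ => Or.inl rfl
    refine ⟨fun a m => ?_, fun a m => ?_⟩
    · rw [card_admissiblePairs_zero]
      rcases Nat.eq_zero_or_pos m with rfl | hm
      · cases a <;> simp [intChoose]
      · simp [intChoose_of_neg_left (show -(m : ℤ) < 0 by omega), hm.ne']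
    · rw [hTop, card_admissiblePairs_zero, intChoose_of_neg_left (by omega)]
      grind
  | succ n ih =>
    have hTop := fun a m => card_admissiblePairsTop_succ_of_formula n a m ih.1 ih.2
    push_cast
    exact ⟨fun a m => card_admissiblePairs_succ_of_formula n a m ih.1 (hTop a m), hTop⟩

lemma prod_Icc_intChoose_succ_top {p : ℕ} (hp : 1 ≤ p) {f : ℕ → ℤ} (hf : f (p + 2) = 0) :
    ∏ k ∈ Icc 1 (p + 1), intChoose (f k) (f (k + 1)) =
      ∏ k ∈ Icc 1 p, intChoose (f k) (f (k + 1)) := by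
  rw [prod_Icc_succ_top (by omega), hf]
  rcases lt_or_ge (f (p + 1)) 0 with hneg | hnonneg
  · rw [prod_eq_zero (i := p) (mem_Icc.mpr ⟨hp, le_rfl⟩) (intChoose_of_neg_right hneg), zero_mul]
  · simp [intChoose, hnonneg]

lemma pair_eq_of_mem_chains {n p : ℕ} {e : ℕ → ℕ} {z : Finset ℕ × Finset ℕ}
    {T : ℕ → Finset ℕ} (hz : z ∈ admissiblePairs n (e 1) (e (p + 1)))
    (hT : T ∈ chains p z.1 z.2 e) : (T 1, T (p + 1)) = z := by
  obtain ⟨-, -, hS, -, -⟩ := mem_admissiblePairs.mp hz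
  obtain ⟨h1, hST, -, hc, -⟩ := mem_chains.mp hT
  exact Prod.ext h1 (eq_of_subset_of_card_le hST (by rw [hc (p + 1) (by omega) le_rfl, hS])).symm

open scoped Classical in
lemma setOf_chain_eq_biUnion_chains (p n : ℕ) (e : ℕ → ℕ) :
    {T : ℕ → Finset ℕ | T 1 ⊆ Icc 1 n ∧ (∀ k, 1 ≤ k → k ≤ p → T (k + 1) ⊆ T k) ∧
        (∀ i, 1 ≤ i → i ≤ p + 1 → #(T i) = e i) ∧ (∀ k ∈ T (p + 1), 2 ≤ k → k - 1 ∈ T 1) ∧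
        (∀ i, i < 1 ∨ p + 1 < i → T i = ∅)} =
      ↑((admissiblePairs n (e 1) (e (p + 1))).biUnion fun z => chains p z.1 z.2 e) := by
  ext T
  simp only [Set.mem_ofPred_eq, mem_coe, mem_biUnion]
  constructor
  · rintro ⟨hU, hchain, hc, hadm, h0⟩
    exact ⟨(T 1, T (p + 1)), mem_admissiblePairs.mpr ⟨hU, hc 1 le_rfl (by omega),
      hc (p + 1) (by omega) le_rfl, subset_one_of_chain hchain (by omega) le_rfl, hadm⟩,
      mem_chains.mpr ⟨rfl, subset_rfl, hchain, hc, h0⟩⟩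
  · rintro ⟨z, hz, hT⟩
    obtain ⟨hU, -, -, -, hadm⟩ := mem_admissiblePairs.mp hz
    obtain ⟨-, -, hchain, hc, h0⟩ := mem_chains.mp hT
    obtain rfl := pair_eq_of_mem_chains hz hT
    exact ⟨hU, hchain, hc, hadm, h0⟩

theorem card_coordinate_subreps_regular_Ap1_general (p n : ℕ)
    (hp : 2 ≤ p) (e : ℕ → ℕ) :
    Set.ncard {T : ℕ → Finset ℕ |
        T 1 ⊆ Finset.Icc 1 n ∧
        (∀ k, 1 ≤ k → k ≤ p → T (k + 1) ⊆ T k) ∧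
        (∀ i, 1 ≤ i → i ≤ p + 1 → (T i).card = e i) ∧
        (∀ k ∈ T (p + 1), 2 ≤ k → k - 1 ∈ T 1) ∧
        (∀ i, i < 1 ∨ p + 1 < i → T i = ∅)}
      = intChoose (e 1 : ℤ) (e (p + 1) : ℤ) *
        intChoose ((n : ℤ) - e (p + 1)) ((e 1 : ℤ) - e (p + 1)) *
        ∏ k ∈ Finset.Icc 1 (p - 1),
          intChoose ((e k : ℤ) - e (p + 1)) ((e (k + 1) : ℤ) - e (p + 1)) := by
  classical
  have hdisj : (admissiblePairs n (e 1) (e (p + 1)) : Set (Finset ℕ × Finset ℕ)).PairwiseDisjoint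
      fun z => chains p z.1 z.2 e := fun z hz z' hz' hne =>
    disjoint_left.mpr fun T hT hT' =>
      hne ((pair_eq_of_mem_chains hz hT).symm.trans (pair_eq_of_mem_chains hz' hT'))
  have hfiber : ∀ z ∈ admissiblePairs n (e 1) (e (p + 1)), #(chains p z.1 z.2 e) =
      ∏ k ∈ Icc 1 p, intChoose ((e k : ℤ) - e (p + 1)) ((e (k + 1) : ℤ) - e (p + 1)) := by
    intro z hz
    obtain ⟨-, hU, hS, hSU, -⟩ := mem_admissiblePairs.mp hz
    rw [card_chains p hSU hU, hS]
  obtain ⟨q, rfl⟩ : ∃ q, p = q + 1 := ⟨p - 1, by omega⟩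
  rw [setOf_chain_eq_biUnion_chains, Set.ncard_coe_finset, card_biUnion hdisj,
    sum_const_nat hfiber, card_admissiblePairs, intChoose_natCast,
    prod_Icc_intChoose_succ_top (by omega) (by simp), Nat.add_sub_cancel]

/-- Counting coordinate subrepresentations of the regular homogeneous representation
`Reg_p^n(0)` of the quiver of type `Ã_{p,1}`: the number of chains
`T_{p+1} ⊆ T_p ⊆ ⋯ ⊆ T_1 ⊆ [1,n]` with `|T_i| = e_i` and `k−1 ∈ T_1` for every
`k ∈ T_{p+1}` with `k ≥ 2` (encoded as functions `ℕ → Finset ℕ` vanishing outside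
`[1,p+1]`) equals
`C(e_1, e_{p+1}) · C(n−e_{p+1}, e_1−e_{p+1}) · ∏_{k=1}^{p−1} C(e_k − e_{p+1}, e_{k+1} − e_{p+1})`. -/
theorem card_coordinate_subreps_regular_Ap1 (p n : ℕ)
    (hp : 2 ≤ p) (hn : 1 ≤ n) (e : ℕ → ℕ) :
    Set.ncard {T : ℕ → Finset ℕ |
        T 1 ⊆ Finset.Icc 1 n ∧
        (∀ k, 1 ≤ k → k ≤ p → T (k + 1) ⊆ T k) ∧
        (∀ i, 1 ≤ i → i ≤ p + 1 → (T i).card = e i) ∧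
        (∀ k ∈ T (p + 1), 2 ≤ k → k - 1 ∈ T 1) ∧
        (∀ i, i < 1 ∨ p + 1 < i → T i = ∅)}
      = intChoose (e 1 : ℤ) (e (p + 1) : ℤ) *
        intChoose ((n : ℤ) - e (p + 1)) ((e 1 : ℤ) - e (p + 1)) *
        ∏ k ∈ Finset.Icc 1 (p - 1),
          intChoose ((e k : ℤ) - e (p + 1)) ((e (k + 1) : ℤ) - e (p + 1)) :=
  card_coordinate_subreps_regular_Ap1_general p n hp e
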